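/- Let a, c, x, y be complex numbers, and let b be a complex number such that b and b−1 are not nonpositive integers and c is not a nonpositive integer. Then x·∂Ψ₂/∂x(a;b,c;x,y) + (b−1)·Ψ₂(a;b,c;x,y) = (b−1)·Ψ₂(a;b−1,c;x,y), where ∂Ψ₂/∂x denotes the partial derivative of Ψ₂(a;b,c;·,·) in its first variable. -/

import Mathlib

open Complex

/-- Pochhammer symbol `(q)_n = q (q+1) ⋯ (q+n-1)`. -/
noncomputable def poch (q : ℂ) (n : ℕ) : ℂ := (ascPochhammer ℂ n).eval q

/-- Confluent hypergeometric function `₁F₁(a; b; x) = ∑ₛ (a)ₛ xˢ / (s! (b)ₛ)`. -/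
noncomputable def oneF1 (a b x : ℂ) : ℂ :=
  ∑' s : ℕ, poch a s * x ^ s / ((s.factorial : ℂ) * poch b s)

/-- Humbert function `Ψ₂(a; b, c; x, y) = ∑ₘ,ₙ (a)ₘ₊ₙ xᵐ yⁿ / (m! n! (b)ₘ (c)ₙ)`. -/
noncomputable def psi2 (a b c x y : ℂ) : ℂ :=
  ∑' p : ℕ × ℕ, poch a (p.1 + p.2) * x ^ p.1 * y ^ p.2 /
    ((p.1.factorial : ℂ) * (p.2.factorial : ℂ) * poch b p.1 * poch c p.2)

section aux
open Filter

lemma poch_zero (q : ℂ) : poch q 0 = 1 := by simp [poch]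

lemma poch_succ (q : ℂ) (n : ℕ) : poch q (n+1) = poch q n * (q + n) := by
  simp [poch, ascPochhammer_succ_right, Polynomial.eval_mul]

lemma poch_succ_left (q : ℂ) (n : ℕ) : poch q (n+1) = q * poch (q+1) n := by
  simp [poch, ascPochhammer_succ_left, Polynomial.eval_comp]

lemma poch_ne_zero {q : ℂ} (hq : ∀ n : ℕ, q ≠ -(n:ℂ)) (m : ℕ) : poch q m ≠ 0 := by
  induction m with
  | zero => simp [poch_zero]
  | succ n ih =>
    rw [poch_succ]
    refine mul_ne_zero ih ?_
    intro h
    exact hq n (by linear_combination h)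

lemma poch_key (b : ℂ) (m : ℕ) : poch (b-1) m * (b - 1 + m) = (b - 1) * poch b m := by
  have h1 := poch_succ (b-1) m
  have h2 := poch_succ_left (b-1) m
  rw [show b - 1 + 1 = b by ring] at h2
  rw [← h1, h2]

lemma poch_norm_le (a : ℂ) (k : ℕ) : ‖poch a k‖ ≤ (max ‖a‖ 1)^k * k.factorial := by
  induction k with
  | zero => simp [poch_zero]
  | succ n ih =>
    rw [poch_succ]
    have h1 : ‖poch a n * (a + n)‖ = ‖poch a n‖ * ‖a + (n:ℂ)‖ := norm_mul _ _
    rw [h1]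
    have h2 : ‖a + (n:ℂ)‖ ≤ max ‖a‖ 1 * (n+1) := by
      calc ‖a + (n:ℂ)‖ ≤ ‖a‖ + n := by
            simpa using norm_add_le a (n:ℂ)
        _ ≤ max ‖a‖ 1 * (n+1) := by
            have h3 : ‖a‖ ≤ max ‖a‖ 1 := le_max_left _ _
            have h4 : (1:ℝ) ≤ max ‖a‖ 1 := le_max_right _ _
            nlinarith [norm_nonneg a]
    calc ‖poch a n‖ * ‖a + (n:ℂ)‖ ≤ ((max ‖a‖ 1)^n * n.factorial) * (max ‖a‖ 1 * (n+1)) := by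
          apply mul_le_mul ih h2 (norm_nonneg _)
          positivity
      _ = (max ‖a‖ 1)^(n+1) * (n+1).factorial := by
          rw [Nat.factorial_succ]; push_cast; ring

lemma summable_geom_div_poch {b : ℂ} (hb : ∀ n : ℕ, b ≠ -(n:ℂ)) {t : ℝ} (ht : 0 < t) :
    Summable (fun m : ℕ => t^m / ‖poch b m‖) := by
  apply summable_of_ratio_test_tendsto_lt_one (l := 0) one_pos
  · refine Eventually.of_forall fun n => ?_
    have h1 : poch b n ≠ 0 := poch_ne_zero hb n
    have h2 : (0:ℝ) < ‖poch b n‖ := norm_pos_iff.mpr h1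
    positivity
  · have key : ∀ n : ℕ, ‖t^(n+1) / ‖poch b (n+1)‖‖ / ‖t^n / ‖poch b n‖‖ = t / ‖b + n‖ := by
      intro n
      have h1 : poch b n ≠ 0 := poch_ne_zero hb n
      have h2 : poch b (n+1) ≠ 0 := poch_ne_zero hb (n+1)
      rw [poch_succ]
      have hp : (0:ℝ) < ‖poch b n‖ := norm_pos_iff.mpr h1
      rw [Real.norm_eq_abs, Real.norm_eq_abs, abs_div, abs_div, abs_norm, abs_norm,
        norm_mul, abs_of_pos (pow_pos ht (n+1)), abs_of_pos (pow_pos ht n), pow_succ]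
      have hbn : b + (n:ℂ) ≠ 0 := fun h => hb n (by linear_combination h)
      have hbn' : (0:ℝ) < ‖b + (n:ℂ)‖ := norm_pos_iff.mpr hbn
      field_simp
    simp_rw [key]
    apply Tendsto.div_atTop (tendsto_const_nhds)
    apply tendsto_atTop_mono (f := fun n : ℕ => (n:ℝ) - ‖b‖)
    · intro n
      have h3 : ‖(n:ℂ)‖ ≤ ‖b + n‖ + ‖b‖ := by
        calc ‖(n:ℂ)‖ = ‖(b + n) - b‖ := by ring_nf
          _ ≤ ‖b + n‖ + ‖b‖ := norm_sub_le _ _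
      have h2 : ‖(n:ℂ)‖ = (n:ℝ) := by simp
      linarith
    · apply tendsto_atTop_add_const_right
      exact tendsto_natCast_atTop_atTop

lemma fact_add_le (m n : ℕ) : ((m+n).factorial : ℝ) ≤ 2^(m+n) * m.factorial * n.factorial := by
  have h1 : (m+n).choose n ≤ 2^(m+n) := by
    calc (m+n).choose n ≤ ∑ i ∈ Finset.range (m+n+1), (m+n).choose i :=
          Finset.single_le_sum (fun i _ => Nat.zero_le _) (Finset.mem_range.mpr (by omega))
      _ = 2^(m+n) := Nat.sum_range_choose _
  have h2 : (m+n).choose n * m.factorial * n.factorial = (m+n).factorial :=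
    Nat.add_choose_mul_factorial_mul_factorial m n
  have := congrArg (Nat.cast : ℕ → ℝ) h2
  push_cast at this
  have h1' : ((m+n).choose n : ℝ) ≤ 2^(m+n) := by exact_mod_cast h1
  have hm : (0:ℝ) < m.factorial := by exact_mod_cast m.factorial_pos
  have hn : (0:ℝ) < n.factorial := by exact_mod_cast n.factorial_pos
  rw [← this]
  gcongr

lemma summable_pair {b c : ℂ} (hb : ∀ n : ℕ, b ≠ -(n:ℂ)) (hc : ∀ n : ℕ, c ≠ -(n:ℂ))
    {s t : ℝ} (hs : 0 < s) (ht : 0 < t) :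
    Summable (fun p : ℕ × ℕ => s^p.1 / ‖poch b p.1‖ * (t^p.2 / ‖poch c p.2‖)) := by
  apply Summable.mul_of_nonneg (summable_geom_div_poch hb hs) (summable_geom_div_poch hc ht)
  · intro m; positivity
  · intro n; positivity

lemma term_norm_le (a b c y : ℂ) (m n : ℕ) (t : ℂ) {r r2 : ℝ} (htr : ‖t‖ ≤ r) (hy : ‖y‖ ≤ r2) :
    ‖poch a (m+n) * t^m * y^n / ((m.factorial:ℂ) * n.factorial * poch b m * poch c n)‖ ≤
      (2*(max ‖a‖ 1)*r)^m / ‖poch b m‖ * ((2*(max ‖a‖ 1)*r2)^n / ‖poch c n‖) := by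
  set A := max ‖a‖ 1 with hA
  have hA1 : (1:ℝ) ≤ A := le_max_right _ _
  have hr : (0:ℝ) ≤ r := le_trans (norm_nonneg t) htr
  have hr2 : (0:ℝ) ≤ r2 := le_trans (norm_nonneg y) hy
  have hm : (0:ℝ) < m.factorial := by exact_mod_cast m.factorial_pos
  have hn : (0:ℝ) < n.factorial := by exact_mod_cast n.factorial_pos
  rw [norm_div]
  have hden : ‖((m.factorial:ℂ) * n.factorial * poch b m * poch c n)‖ =
      m.factorial * n.factorial * ‖poch b m‖ * ‖poch c n‖ := by
    simp [norm_mul, Complex.norm_natCast]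
  rw [hden]
  have hnum : ‖poch a (m+n) * t^m * y^n‖ ≤ A^(m+n) * (m+n).factorial * r^m * r2^n := by
    rw [norm_mul, norm_mul, norm_pow, norm_pow]
    have h1 := poch_norm_le a (m+n)
    have h2 : ‖t‖^m ≤ r^m := pow_le_pow_left₀ (norm_nonneg t) htr m
    have h3 : ‖y‖^n ≤ r2^n := pow_le_pow_left₀ (norm_nonneg y) hy n
    calc ‖poch a (m+n)‖ * ‖t‖^m * ‖y‖^n ≤ (A^(m+n) * (m+n).factorial) * r^m * r2^n := by
          apply mul_le_mul (mul_le_mul h1 h2 (by positivity) (by positivity)) h3 (by positivity)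
          positivity
      _ = A^(m+n) * (m+n).factorial * r^m * r2^n := by ring
  have hfact := fact_add_le m n
  have hnum2 : ‖poch a (m+n) * t^m * y^n‖ ≤ (2*A*r)^m * (2*A*r2)^n * m.factorial * n.factorial := by
    calc ‖poch a (m+n) * t^m * y^n‖ ≤ A^(m+n) * (m+n).factorial * r^m * r2^n := hnum
      _ ≤ A^(m+n) * (2^(m+n) * m.factorial * n.factorial) * r^m * r2^n := by
          gcongr
      _ = (2*A*r)^m * (2*A*r2)^n * m.factorial * n.factorial := by
          rw [pow_add, pow_add, mul_pow, mul_pow, mul_pow, mul_pow]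
          ring
  have hpb : (0:ℝ) ≤ ‖poch b m‖ := norm_nonneg _
  have hpc : (0:ℝ) ≤ ‖poch c n‖ := norm_nonneg _
  rcases eq_or_lt_of_le hpb with hpb0 | hpb0
  · rw [← hpb0]
    simp only [div_zero, zero_mul, mul_zero, zero_div]
    positivity
  rcases eq_or_lt_of_le hpc with hpc0 | hpc0
  · rw [← hpc0]
    simp only [div_zero, zero_mul, mul_zero, zero_div]
    positivity
  rw [div_le_iff₀ (by positivity)]
  calc ‖poch a (m+n) * t^m * y^n‖ ≤ (2*A*r)^m * (2*A*r2)^n * m.factorial * n.factorial := hnum2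
    _ = (2*A*r)^m / ‖poch b m‖ * ((2*A*r2)^n / ‖poch c n‖) *
        (m.factorial * n.factorial * ‖poch b m‖ * ‖poch c n‖) := by
        rw [div_mul_div_comm, div_mul_eq_mul_div, eq_div_iff (by positivity)]
        ring

lemma dterm_norm_le (a b c y : ℂ) (m n : ℕ) (t : ℂ) {r r2 : ℝ} (htr : ‖t‖ ≤ r) (hr1 : 1 ≤ r)
    (hy : ‖y‖ ≤ r2) :
    ‖poch a (m+n) * ((m:ℂ) * t^(m-1)) * y^n /
        ((m.factorial:ℂ) * n.factorial * poch b m * poch c n)‖ ≤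
      (4*(max ‖a‖ 1)*r)^m / ‖poch b m‖ * ((2*(max ‖a‖ 1)*r2)^n / ‖poch c n‖) := by
  set A := max ‖a‖ 1 with hA
  have hA1 : (1:ℝ) ≤ A := le_max_right _ _
  have hr : (0:ℝ) ≤ r := le_trans zero_le_one hr1
  have hr2 : (0:ℝ) ≤ r2 := le_trans (norm_nonneg y) hy
  have hm : (0:ℝ) < m.factorial := by exact_mod_cast m.factorial_pos
  have hn : (0:ℝ) < n.factorial := by exact_mod_cast n.factorial_pos
  rw [norm_div]
  have hden : ‖((m.factorial:ℂ) * n.factorial * poch b m * poch c n)‖ =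
      m.factorial * n.factorial * ‖poch b m‖ * ‖poch c n‖ := by
    simp [norm_mul, Complex.norm_natCast]
  rw [hden]
  have hmid : (m:ℝ) * ‖t‖^(m-1) ≤ 2^m * r^m := by
    have h1 : ‖t‖^(m-1) ≤ r^(m-1) := pow_le_pow_left₀ (norm_nonneg t) htr _
    have h2 : r^(m-1) ≤ r^m := pow_le_pow_right₀ hr1 (Nat.sub_le m 1)
    have h3 : (m:ℝ) ≤ 2^m := by exact_mod_cast (Nat.lt_two_pow_self (n := m)).le
    have h4 : (0:ℝ) ≤ ‖t‖^(m-1) := by positivity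
    have h5 : (0:ℝ) ≤ (2:ℝ)^m := by positivity
    calc (m:ℝ) * ‖t‖^(m-1) ≤ 2^m * ‖t‖^(m-1) := mul_le_mul_of_nonneg_right h3 h4
      _ ≤ 2^m * r^(m-1) := mul_le_mul_of_nonneg_left h1 h5
      _ ≤ 2^m * r^m := mul_le_mul_of_nonneg_left h2 h5
  have hnum2 : ‖poch a (m+n) * ((m:ℂ) * t^(m-1)) * y^n‖ ≤
      (4*A*r)^m * (2*A*r2)^n * m.factorial * n.factorial := by
    rw [norm_mul, norm_mul, norm_mul, norm_pow, norm_pow]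
    have h1 := poch_norm_le a (m+n)
    have h3 : ‖y‖^n ≤ r2^n := pow_le_pow_left₀ (norm_nonneg y) hy n
    have h5 : ‖(m:ℂ)‖ = (m:ℝ) := by simp
    rw [h5]
    have hfact := fact_add_le m n
    calc ‖poch a (m+n)‖ * ((m:ℝ) * ‖t‖^(m-1)) * ‖y‖^n
        ≤ (A^(m+n) * (m+n).factorial) * (2^m * r^m) * r2^n := by
          apply mul_le_mul (mul_le_mul h1 hmid (by positivity) (by positivity)) h3 (by positivity)
          positivity
      _ ≤ (A^(m+n) * (2^(m+n) * m.factorial * n.factorial)) * (2^m * r^m) * r2^n := by gcongr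
      _ = (4*A*r)^m * (2*A*r2)^n * m.factorial * n.factorial := by
          rw [pow_add, pow_add, mul_pow, mul_pow, mul_pow, mul_pow]
          ring_nf
          rw [show (4:ℝ) = 2*2 by norm_num, mul_pow]
          ring
  have hpb : (0:ℝ) ≤ ‖poch b m‖ := norm_nonneg _
  have hpc : (0:ℝ) ≤ ‖poch c n‖ := norm_nonneg _
  rcases eq_or_lt_of_le hpb with hpb0 | hpb0
  · rw [← hpb0]
    simp only [div_zero, zero_mul, mul_zero, zero_div]
    positivity
  rcases eq_or_lt_of_le hpc with hpc0 | hpc0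
  · rw [← hpc0]
    simp only [div_zero, zero_mul, mul_zero, zero_div]
    positivity
  rw [div_le_iff₀ (by positivity)]
  calc ‖poch a (m+n) * ((m:ℂ) * t^(m-1)) * y^n‖
      ≤ (4*A*r)^m * (2*A*r2)^n * m.factorial * n.factorial := hnum2
    _ = (4*A*r)^m / ‖poch b m‖ * ((2*A*r2)^n / ‖poch c n‖) *
        (m.factorial * n.factorial * ‖poch b m‖ * ‖poch c n‖) := by
        rw [div_mul_div_comm, div_mul_eq_mul_div, eq_div_iff (by positivity)]
        ring

noncomputable def fterm (a b c y : ℂ) (p : ℕ × ℕ) (s : ℂ) : ℂ :=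
  poch a (p.1 + p.2) * s ^ p.1 * y ^ p.2 /
    ((p.1.factorial : ℂ) * (p.2.factorial : ℂ) * poch b p.1 * poch c p.2)

noncomputable def fterm' (a b c y : ℂ) (p : ℕ × ℕ) (s : ℂ) : ℂ :=
  poch a (p.1 + p.2) * ((p.1 : ℂ) * s ^ (p.1 - 1)) * y ^ p.2 /
    ((p.1.factorial : ℂ) * (p.2.factorial : ℂ) * poch b p.1 * poch c p.2)

lemma fterm_hasDerivAt (a b c y : ℂ) (p : ℕ × ℕ) (s : ℂ) :
    HasDerivAt (fterm a b c y p) (fterm' a b c y p s) s := by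
  have h1 : HasDerivAt (fun s : ℂ => s ^ p.1) ((p.1 : ℂ) * s ^ (p.1 - 1)) s :=
    hasDerivAt_pow _ _
  exact ((h1.const_mul (poch a (p.1 + p.2))).mul_const (y ^ p.2)).div_const _

lemma psi2_eq (a b c y : ℂ) : (fun s => psi2 a b c s y) = fun s => ∑' p, fterm a b c y p s := rfl


end aux

theorem stmt10 (a b c x y : ℂ) (hb : ∀ n : ℕ, b ≠ -(n : ℂ))
    (hb1 : ∀ n : ℕ, b - 1 ≠ -(n : ℂ)) (hc : ∀ n : ℕ, c ≠ -(n : ℂ)) :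
    x * deriv (fun s => psi2 a b c s y) x + (b - 1) * psi2 a b c x y =
      (b - 1) * psi2 a (b - 1) c x y := by
  set A := max ‖a‖ 1 with hA
  have hA1 : (1:ℝ) ≤ A := le_max_right _ _
  have hR1 : (1:ℝ) ≤ ‖x‖ + 1 := by linarith [norm_nonneg x]
  have hyr2 : ‖y‖ ≤ ‖y‖ + 1 := by linarith
  have hxR : ‖x‖ ≤ ‖x‖ + 1 := by linarith
  have hu_sum : Summable (fun p : ℕ × ℕ =>
      (4*A*(‖x‖+1))^p.1 / ‖poch b p.1‖ * ((2*A*(‖y‖+1))^p.2 / ‖poch c p.2‖)) :=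
    summable_pair hb hc (by positivity) (by positivity)
  have hT_sum : ∀ (b' : ℂ), (∀ n : ℕ, b' ≠ -(n:ℂ)) →
      Summable (fun p : ℕ × ℕ => fterm a b' c y p x) := by
    intro b' hb'
    apply Summable.of_norm_bounded (summable_pair hb' hc
      (s := 2*A*(‖x‖+1)) (t := 2*A*(‖y‖+1)) (by positivity) (by positivity))
    intro p
    exact term_norm_le a b' c y p.1 p.2 x hxR hyr2
  have hG_sum : Summable (fun p : ℕ × ℕ => fterm' a b c y p x) := by
    apply Summable.of_norm_bounded hu_sum
    intro p
    exact dterm_norm_le a b c y p.1 p.2 x hxR hR1 hyr2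
  have hderiv : HasDerivAt (fun s => ∑' p, fterm a b c y p s)
      (∑' p, fterm' a b c y p x) x := by
    apply hasDerivAt_tsum_of_isPreconnected hu_sum Metric.isOpen_ball
      (convex_ball (0:ℂ) (‖x‖+1)).isPreconnected
      (fun p s _ => fterm_hasDerivAt a b c y p s) ?_ ?_ (hT_sum b hb) ?_
    · intro p s hs
      have hsR : ‖s‖ ≤ ‖x‖ + 1 := le_of_lt (by simpa [Metric.mem_ball, dist_eq_norm] using hs)
      exact dterm_norm_le a b c y p.1 p.2 s hsR hR1 hyr2
    · simp [Metric.mem_ball, dist_eq_norm]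
    · simp [Metric.mem_ball, dist_eq_norm]
  have hderiv_eq : deriv (fun s => psi2 a b c s y) x = ∑' p, fterm' a b c y p x := by
    rw [psi2_eq]; exact hderiv.deriv
  rw [hderiv_eq]
  have hTb := hT_sum b hb
  have hTb1 := hT_sum (b-1) hb1
  rw [show psi2 a b c x y = ∑' p, fterm a b c y p x from rfl,
    show psi2 a (b-1) c x y = ∑' p, fterm a (b-1) c y p x from rfl]
  rw [← tsum_mul_left, ← tsum_mul_left, ← tsum_mul_left,
    ← Summable.tsum_add (hG_sum.mul_left x) (hTb.mul_left (b-1))]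
  apply tsum_congr
  intro p
  obtain ⟨m, n⟩ := p
  simp only [fterm, fterm']
  have hfm : ((m.factorial : ℂ)) ≠ 0 := by exact_mod_cast m.factorial_ne_zero
  have hfn : ((n.factorial : ℂ)) ≠ 0 := by exact_mod_cast n.factorial_ne_zero
  have hpb : poch b m ≠ 0 := poch_ne_zero hb m
  have hpb1 : poch (b-1) m ≠ 0 := poch_ne_zero hb1 m
  have hpc : poch c n ≠ 0 := poch_ne_zero hc n
  have hxm : x * ((m:ℂ) * x ^ (m - 1)) = (m : ℂ) * x ^ m := by
    cases m with
    | zero => simp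
    | succ k => push_cast; rw [pow_succ]; ring_nf
  have hkey := poch_key b m
  field_simp
  linear_combination (poch a (m+n) * x^m * y^n) * hkey
    + (poch a (m+n) * y^n * poch (b-1) m) * hxm
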